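/- Let A and B be rings linked by a bimodule ${}_AP_B$ that is left and right finite projective, satisfies Hom_B(P_B, B_B) ≅ Hom_A({}_AP, {}_AA) as B-A-bimodules, and is biseparable (both evaluation maps P ⊗_B Hom_A({}_AP, {}_AA) → A and Hom_B(P_B, B_B) ⊗_A P → B split as bimodule epimorphisms). Then A and B are symmetric separably equivalent: with Q := Hom_B(P_B, B_B), there exist a split A-A-bimodule epimorphism ν: P ⊗_B Q → A, a split B-B-bimodule epimorphism μ: Q ⊗_A P → B, an element Σᵢ q'ᵢ ⊗ p'ᵢ ∈ Q ⊗_A P with Σᵢ ν(p ⊗ q'ᵢ)·p'ᵢ = p and Σᵢ q'ᵢ·ν(p'ᵢ ⊗ q) = q, and an element Σⱼ pⱼ ⊗ qⱼ ∈ P ⊗_B Q with Σⱼ μ(q ⊗ pⱼ)·qⱼ = q and Σⱼ pⱼ·μ(qⱼ ⊗ p) = p, for all p ∈ P, q ∈ Q. -/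

import Mathlib

/-! ### A balanced tensor product of a right module and a left module
over a possibly noncommutative ring, constructed as a quotient of the
`ℤ`-tensor product. -/

open MulOpposite
open scoped TensorProduct

section BalCore

variable (R : Type*) [Ring R] (M : Type*) [AddCommGroup M] [Module Rᵐᵒᵖ M]
  (N : Type*) [AddCommGroup N] [Module R N]

/-- The subgroup of relations defining the balanced tensor product. -/
def balRel : Submodule ℤ (TensorProduct ℤ M N) :=
  Submodule.span ℤ {x | ∃ (m : M) (r : R) (n : N), x = (op r • m) ⊗ₜ[ℤ] n - m ⊗ₜ[ℤ] (r • n)}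

/-- The balanced tensor product `M ⊗[R] N` of a right `R`-module `M` and a
left `R`-module `N`. -/
def Bal : Type _ := TensorProduct ℤ M N ⧸ balRel R M N

noncomputable instance : AddCommGroup (Bal R M N) := Submodule.Quotient.addCommGroup _

variable {M N}

/-- The canonical image of `m ⊗ n` in the balanced tensor product. -/
noncomputable def Bal.tmul (m : M) (n : N) : Bal R M N := Submodule.Quotient.mk (m ⊗ₜ[ℤ] n)

theorem Bal.add_tmul (m m' : M) (n : N) :
    Bal.tmul R (m + m') n = Bal.tmul R m n + Bal.tmul R m' n := by
  show Submodule.Quotient.mk _ = _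
  rw [TensorProduct.add_tmul]
  rfl

theorem Bal.tmul_add (m : M) (n n' : N) :
    Bal.tmul R m (n + n') = Bal.tmul R m n + Bal.tmul R m n' := by
  show Submodule.Quotient.mk _ = _
  rw [TensorProduct.tmul_add]
  rfl

theorem Bal.zero_tmul (n : N) : Bal.tmul R (0 : M) n = 0 := by
  show Submodule.Quotient.mk _ = _
  rw [TensorProduct.zero_tmul]
  rfl

theorem Bal.tmul_zero (m : M) : Bal.tmul R m (0 : N) = 0 := by
  show Submodule.Quotient.mk _ = _
  rw [TensorProduct.tmul_zero]
  rfl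

/-- The fundamental balancing relation `(m · r) ⊗ n = m ⊗ (r · n)`. -/
theorem Bal.op_smul_tmul (m : M) (r : R) (n : N) :
    Bal.tmul R (op r • m) n = Bal.tmul R m (r • n) :=
  (Submodule.Quotient.eq _).2 (Submodule.subset_span ⟨m, r, n, rfl⟩)

theorem Bal.induction_on {C : Bal R M N → Prop} (x : Bal R M N) (zero : C 0)
    (tmul : ∀ m n, C (Bal.tmul R m n)) (add : ∀ x y, C x → C y → C (x + y)) : C x := by
  obtain ⟨y, rfl⟩ := Submodule.Quotient.mk_surjective _ x
  induction y using TensorProduct.induction_on with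
  | zero => exact zero
  | tmul m n => exact tmul m n
  | add a b ha hb =>
      have : (Submodule.Quotient.mk (a + b) : Bal R M N)
          = Submodule.Quotient.mk a + Submodule.Quotient.mk b := rfl
      rw [this]; exact add _ _ ha hb

/-- Lift a balanced biadditive map to the balanced tensor product. -/
noncomputable def Bal.liftFun {T : Type*} [AddCommGroup T] (f : M → N → T)
    (h1 : ∀ m m' n, f (m + m') n = f m n + f m' n)
    (h2 : ∀ m n n', f m (n + n') = f m n + f m n')
    (h3 : ∀ (m : M) (r : R) (n : N), f (op r • m) n = f m (r • n)) : Bal R M N →+ T :=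
  letI f₂ : M →+ N →+ T :=
    AddMonoidHom.mk' (fun m => AddMonoidHom.mk' (f m) (h2 m))
      (fun m m' => AddMonoidHom.ext fun n => h1 m m' n)
  letI bil : M →ₗ[ℤ] N →ₗ[ℤ] T :=
    { toFun := fun m => (f₂ m).toIntLinearMap
      map_add' := fun m m' => LinearMap.ext fun n => by simp
      map_smul' := fun z m => LinearMap.ext fun n => by
        simp [map_zsmul] }
  ((balRel R M N).liftQ (TensorProduct.lift bil) (by
    rw [balRel, Submodule.span_le]
    rintro x ⟨m, r, n, rfl⟩
    simp only [SetLike.mem_coe, LinearMap.mem_ker, map_sub]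
    first
      | simp [bil, f₂, h3 m r n]; done
      | (show (TensorProduct.lift bil) _ = 0
         rw [map_sub, TensorProduct.lift.tmul, TensorProduct.lift.tmul]
         exact sub_eq_zero.2 (h3 m r n)))).toAddMonoidHom

@[simp] theorem Bal.liftFun_tmul {T : Type*} [AddCommGroup T] (f : M → N → T)
    (h1 : ∀ m m' n, f (m + m') n = f m n + f m' n)
    (h2 : ∀ m n n', f m (n + n') = f m n + f m n')
    (h3 : ∀ (m : M) (r : R) (n : N), f (op r • m) n = f m (r • n)) (m : M) (n : N) :
    Bal.liftFun R f h1 h2 h3 (Bal.tmul R m n) = f m n := by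
  simp [Bal.liftFun, Bal.tmul, Submodule.Quotient.mk]
  rfl

theorem Bal.addHom_ext {T : Type*} [AddCommGroup T] {f g : Bal R M N →+ T}
    (h : ∀ m n, f (Bal.tmul R m n) = g (Bal.tmul R m n)) : f = g := by
  ext x
  refine Bal.induction_on R (C := fun z => f z = g z) x (by simp) h
    (fun x y hx hy => by simp only [map_add]; rw [hx, hy])

end BalCore
section BalModule

variable (R : Type*) [Ring R] {M : Type*} [AddCommGroup M] [Module Rᵐᵒᵖ M]
  {N : Type*} [AddCommGroup N] [Module R N]

section Left

variable {S : Type*} [Ring S] [Module S M] [SMulCommClass S Rᵐᵒᵖ M]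

/-- The left action on the balanced tensor product through the first factor. -/
noncomputable def Bal.lsmulHom (s : S) : Bal R M N →+ Bal R M N :=
  Bal.liftFun R (fun m n => Bal.tmul R (s • m) n)
    (fun m m' n => by
      show Bal.tmul R (s • (m + m')) n = Bal.tmul R (s • m) n + Bal.tmul R (s • m') n
      rw [smul_add, Bal.add_tmul])
    (fun m n n' => Bal.tmul_add R _ n n')
    (fun m r n => by
      show Bal.tmul R (s • op r • m) n = Bal.tmul R (s • m) (r • n)
      rw [smul_comm, Bal.op_smul_tmul])

theorem Bal.lsmulHom_tmul (s : S) (m : M) (n : N) :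
    Bal.lsmulHom R (M := M) (N := N) s (Bal.tmul R m n) = Bal.tmul R (s • m) n :=
  Bal.liftFun_tmul R _ _ _ _ m n

noncomputable instance : SMul S (Bal R M N) := ⟨fun s x => Bal.lsmulHom R s x⟩

theorem Bal.lsmul_tmul (s : S) (m : M) (n : N) :
    s • Bal.tmul R m n = Bal.tmul R (s • m) n :=
  Bal.lsmulHom_tmul R s m n

theorem Bal.lsmul_one : Bal.lsmulHom R (M := M) (N := N) (1 : S) = AddMonoidHom.id _ :=
  Bal.addHom_ext R fun m n => by
    rw [Bal.lsmulHom_tmul, one_smul, AddMonoidHom.id_apply]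

theorem Bal.lsmul_mul (s t : S) :
    Bal.lsmulHom R (M := M) (N := N) (s * t) = (Bal.lsmulHom R s).comp (Bal.lsmulHom R t) :=
  Bal.addHom_ext R fun m n => by
    rw [AddMonoidHom.comp_apply, Bal.lsmulHom_tmul, Bal.lsmulHom_tmul, Bal.lsmulHom_tmul,
      mul_smul]

theorem Bal.lsmul_addsmul (s t : S) :
    Bal.lsmulHom R (M := M) (N := N) (s + t) = Bal.lsmulHom R s + Bal.lsmulHom R t :=
  Bal.addHom_ext R fun m n => by
    rw [AddMonoidHom.add_apply, Bal.lsmulHom_tmul, Bal.lsmulHom_tmul, Bal.lsmulHom_tmul,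
      add_smul, Bal.add_tmul]

theorem Bal.lsmul_zerosmul : Bal.lsmulHom R (M := M) (N := N) (0 : S) = 0 :=
  Bal.addHom_ext R fun m n => by
    rw [Bal.lsmulHom_tmul, zero_smul, Bal.zero_tmul, AddMonoidHom.zero_apply]

noncomputable instance : Module S (Bal R M N) where
  one_smul x := DFunLike.congr_fun (Bal.lsmul_one R (M := M) (N := N) (S := S)) x
  mul_smul s t x := DFunLike.congr_fun (Bal.lsmul_mul R s t) x
  smul_zero s := (Bal.lsmulHom R (M := M) (N := N) s).map_zero
  smul_add s x y := (Bal.lsmulHom R s).map_add x y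
  add_smul s t x := DFunLike.congr_fun (Bal.lsmul_addsmul R s t) x
  zero_smul x := DFunLike.congr_fun (Bal.lsmul_zerosmul R (M := M) (N := N) (S := S)) x

end Left

section Right

variable {S : Type*} [Ring S] [Module Sᵐᵒᵖ N] [SMulCommClass R Sᵐᵒᵖ N]

/-- The right action on the balanced tensor product through the second factor. -/
noncomputable def Bal.rsmulHom (s : Sᵐᵒᵖ) : Bal R M N →+ Bal R M N :=
  Bal.liftFun R (fun m n => Bal.tmul R m (s • n))
    (fun m m' n => Bal.add_tmul R m m' _)
    (fun m n n' => by
      show Bal.tmul R m (s • (n + n')) = Bal.tmul R m (s • n) + Bal.tmul R m (s • n')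
      rw [smul_add, Bal.tmul_add])
    (fun m r n => by
      show Bal.tmul R (op r • m) (s • n) = Bal.tmul R m (s • r • n)
      rw [Bal.op_smul_tmul, smul_comm])

theorem Bal.rsmulHom_tmul (s : Sᵐᵒᵖ) (m : M) (n : N) :
    Bal.rsmulHom R (M := M) (N := N) s (Bal.tmul R m n) = Bal.tmul R m (s • n) :=
  Bal.liftFun_tmul R _ _ _ _ m n

noncomputable instance : SMul Sᵐᵒᵖ (Bal R M N) := ⟨fun s x => Bal.rsmulHom R s x⟩

theorem Bal.rsmul_tmul (s : Sᵐᵒᵖ) (m : M) (n : N) :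
    s • Bal.tmul R m n = Bal.tmul R m (s • n) :=
  Bal.rsmulHom_tmul R s m n

theorem Bal.rsmul_one : Bal.rsmulHom R (M := M) (N := N) (1 : Sᵐᵒᵖ) = AddMonoidHom.id _ :=
  Bal.addHom_ext R fun m n => by
    rw [Bal.rsmulHom_tmul, one_smul, AddMonoidHom.id_apply]

theorem Bal.rsmul_mul (s t : Sᵐᵒᵖ) :
    Bal.rsmulHom R (M := M) (N := N) (s * t) = (Bal.rsmulHom R s).comp (Bal.rsmulHom R t) :=
  Bal.addHom_ext R fun m n => by
    rw [AddMonoidHom.comp_apply, Bal.rsmulHom_tmul, Bal.rsmulHom_tmul, Bal.rsmulHom_tmul,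
      mul_smul]

theorem Bal.rsmul_addsmul (s t : Sᵐᵒᵖ) :
    Bal.rsmulHom R (M := M) (N := N) (s + t) = Bal.rsmulHom R s + Bal.rsmulHom R t :=
  Bal.addHom_ext R fun m n => by
    rw [AddMonoidHom.add_apply, Bal.rsmulHom_tmul, Bal.rsmulHom_tmul, Bal.rsmulHom_tmul,
      add_smul, Bal.tmul_add]

theorem Bal.rsmul_zerosmul : Bal.rsmulHom R (M := M) (N := N) (0 : Sᵐᵒᵖ) = 0 :=
  Bal.addHom_ext R fun m n => by
    rw [Bal.rsmulHom_tmul, zero_smul, Bal.tmul_zero, AddMonoidHom.zero_apply]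

noncomputable instance : Module Sᵐᵒᵖ (Bal R M N) where
  one_smul x := DFunLike.congr_fun (Bal.rsmul_one R (M := M) (N := N) (S := S)) x
  mul_smul s t x := DFunLike.congr_fun (Bal.rsmul_mul R s t) x
  smul_zero s := (Bal.rsmulHom R (M := M) (N := N) s).map_zero
  smul_add s x y := (Bal.rsmulHom R s).map_add x y
  add_smul s t x := DFunLike.congr_fun (Bal.rsmul_addsmul R s t) x
  zero_smul x := DFunLike.congr_fun (Bal.rsmul_zerosmul R (M := M) (N := N) (S := S)) x

end Right

end BalModule
section HomBimodule

variable {A B P Q : Type*} [Ring A] [Ring B]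
  [AddCommGroup P] [Module A P] [Module Bᵐᵒᵖ P] [SMulCommClass A Bᵐᵒᵖ P]
  [AddCommGroup Q] [Module B Q] [Module Aᵐᵒᵖ Q] [SMulCommClass B Aᵐᵒᵖ Q]

/-- Right multiplication by `b` as a left `A`-module endomorphism of `P`. -/
noncomputable def rmulLinear (b : B) : P →ₗ[A] P where
  toFun p := op b • p
  map_add' := smul_add (op b)
  map_smul' a p := (smul_comm a (op b) p).symm

/-- Left multiplication by `a` as a right `B`-module endomorphism of `P`. -/
noncomputable def lmulLinear (a : A) : P →ₗ[Bᵐᵒᵖ] P where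
  toFun p := a • p
  map_add' := smul_add a
  map_smul' b p := smul_comm a b p

/-- The right `A`-action (through the domain) on `Hom_B(P_B, B_B)`:
`(f · a) p = f (a • p)`. -/
noncomputable instance : Module Aᵐᵒᵖ (P →ₗ[Bᵐᵒᵖ] B) where
  smul a f := f.comp (lmulLinear a.unop)
  one_smul f := LinearMap.ext fun p => by
    show f ((1 : Aᵐᵒᵖ).unop • p) = f p
    rw [unop_one, one_smul]
  mul_smul a a' f := LinearMap.ext fun p => by
    show f ((a * a').unop • p) = f (a'.unop • a.unop • p)
    rw [MulOpposite.unop_mul, mul_smul]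
  smul_zero a := LinearMap.ext fun p => rfl
  smul_add a f g := LinearMap.ext fun p => rfl
  add_smul a a' f := LinearMap.ext fun p => by
    show f ((a + a').unop • p) = f (a.unop • p) + f (a'.unop • p)
    rw [MulOpposite.unop_add, add_smul, map_add]
  zero_smul f := LinearMap.ext fun p => by
    show f ((0 : Aᵐᵒᵖ).unop • p) = 0
    rw [MulOpposite.unop_zero, zero_smul, map_zero]

theorem opSmul_homBB_apply (a : A) (f : P →ₗ[Bᵐᵒᵖ] B) (p : P) :
    (op a • f) p = f (a • p) := rfl

/-- The left `B`-action (through the domain) on `Hom_A({}_A P, {}_A A)`: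
`(b · f) p = f (p · b)`. -/
noncomputable instance : Module B (P →ₗ[A] A) where
  smul b f := f.comp (rmulLinear b)
  one_smul f := LinearMap.ext fun p => by
    show f (op (1 : B) • p) = f p
    rw [op_one, one_smul]
  mul_smul b b' f := LinearMap.ext fun p => by
    show f (op (b * b') • p) = f (op b' • op b • p)
    rw [op_mul, mul_smul]
  smul_zero b := LinearMap.ext fun p => rfl
  smul_add b f g := LinearMap.ext fun p => rfl
  add_smul b b' f := LinearMap.ext fun p => by
    show f (op (b + b') • p) = f (op b • p) + f (op b' • p)
    rw [op_add, add_smul, map_add]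
  zero_smul f := LinearMap.ext fun p => by
    show f (op (0 : B) • p) = 0
    rw [op_zero, zero_smul, map_zero]

theorem smul_homAA_apply (b : B) (f : P →ₗ[A] A) (p : P) :
    (b • f) p = f (op b • p) := rfl

noncomputable instance : SMulCommClass B Aᵐᵒᵖ (P →ₗ[A] A) :=
  ⟨fun _ _ _ => LinearMap.ext fun _ => rfl⟩

noncomputable instance : SMulCommClass B Aᵐᵒᵖ (P →ₗ[Bᵐᵒᵖ] B) :=
  ⟨fun _ _ _ => LinearMap.ext fun _ => rfl⟩

/-- The map `Q → Hom_A({}_A P, {}_A A)`, `q ↦ ν(- ⊗ q)`. -/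
noncomputable def nuDual (ν : Bal B P Q →+ A)
    (hνl : ∀ (a : A) (x : Bal B P Q), ν (a • x) = a * ν x) (q : Q) : P →ₗ[A] A where
  toFun p := ν (Bal.tmul B p q)
  map_add' p p' := by
    show ν (Bal.tmul B (p + p') q) = ν (Bal.tmul B p q) + ν (Bal.tmul B p' q)
    rw [Bal.add_tmul, map_add]
  map_smul' a p := by
    show ν (Bal.tmul B (a • p) q) = a • ν (Bal.tmul B p q)
    rw [← Bal.lsmul_tmul, hνl, smul_eq_mul]

@[simp] theorem nuDual_apply (ν : Bal B P Q →+ A)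
    (hνl : ∀ (a : A) (x : Bal B P Q), ν (a • x) = a * ν x) (q : Q) (p : P) :
    nuDual ν hνl q p = ν (Bal.tmul B p q) := rfl

/-- The map `Q → Hom_B(P_B, B_B)`, `q ↦ μ(q ⊗ -)`. -/
noncomputable def muDual (μ : Bal A Q P →+ B)
    (hμr : ∀ (b : B) (y : Bal A Q P), μ (op b • y) = μ y * b) (q : Q) : P →ₗ[Bᵐᵒᵖ] B where
  toFun p := μ (Bal.tmul A q p)
  map_add' p p' := by
    show μ (Bal.tmul A q (p + p')) = μ (Bal.tmul A q p) + μ (Bal.tmul A q p')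
    rw [Bal.tmul_add, map_add]
  map_smul' b p := by
    show μ (Bal.tmul A q (b • p)) = b • μ (Bal.tmul A q p)
    rw [← Bal.rsmul_tmul, MulOpposite.smul_eq_mul_unop]
    conv_lhs => rw [← MulOpposite.op_unop b]
    rw [hμr]

@[simp] theorem muDual_apply (μ : Bal A Q P →+ B)
    (hμr : ∀ (b : B) (y : Bal A Q P), μ (op b • y) = μ y * b) (q : Q) (p : P) :
    muDual μ hμr q p = μ (Bal.tmul A q p) := rfl

end HomBimodule
section Evaluations

variable {A B P : Type*} [Ring A] [Ring B]
  [AddCommGroup P] [Module A P] [Module Bᵐᵒᵖ P] [SMulCommClass A Bᵐᵒᵖ P]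

/-- The evaluation map `P ⊗[B] Hom_A({}_A P, {}_A A) → A`, `p ⊗ f ↦ f p`. -/
noncomputable def eval₁ (A B P : Type*) [Ring A] [Ring B]
    [AddCommGroup P] [Module A P] [Module Bᵐᵒᵖ P] [SMulCommClass A Bᵐᵒᵖ P] :
    Bal B P (P →ₗ[A] A) →+ A :=
  Bal.liftFun B (fun p f => f p)
    (fun p p' f => map_add f p p')
    (fun p f f' => rfl)
    (fun p b f => rfl)

@[simp] theorem eval₁_tmul (p : P) (f : P →ₗ[A] A) :
    eval₁ A B P (Bal.tmul B p f) = f p :=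
  Bal.liftFun_tmul B _ _ _ _ p f

/-- The evaluation map `Hom_B(P_B, B_B) ⊗[A] P → B`, `f ⊗ p ↦ f p`. -/
noncomputable def eval₂ (A B P : Type*) [Ring A] [Ring B]
    [AddCommGroup P] [Module A P] [Module Bᵐᵒᵖ P] [SMulCommClass A Bᵐᵒᵖ P] :
    Bal A (P →ₗ[Bᵐᵒᵖ] B) P →+ B :=
  Bal.liftFun A (fun f p => f p)
    (fun f f' p => rfl)
    (fun f p p' => map_add f p p')
    (fun f a p => rfl)

@[simp] theorem eval₂_tmul (f : P →ₗ[Bᵐᵒᵖ] B) (p : P) :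
    eval₂ A B P (Bal.tmul A f p) = f p :=
  Bal.liftFun_tmul A _ _ _ _ f p

end Evaluations
/-! The Frobenius isomorphism `Θ : Q ≅ Hom_A(P, A)` identifies `P ⊗_B Q` with
`P ⊗_B Hom_A(P, A)` as `A`-bimodules, so `ν := eval₁ ∘ (P ⊗ Θ)` is again a split
epimorphism, split by `(P ⊗ Θ⁻¹) ∘ s`; for `μ` the evaluation `eval₂` itself works.
The required elements of `Q ⊗_A P` and `P ⊗_B Q` come from dual bases of the finite
projective modules `_A P` (transported to `Q` by `Θ⁻¹`) and `P_B`. -/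

theorem Module.exists_dual_basis (R M : Type*) [Ring R] [AddCommGroup M] [Module R M]
    [Module.Finite R M] [Module.Projective R M] :
    ∃ (n : ℕ) (x : Fin n → M) (f : Fin n → (M →ₗ[R] R)), ∀ m, ∑ i, f i m • x i = m := by
  obtain ⟨n, π, ι, -, -, hπι⟩ := Module.Finite.exists_comp_eq_id_of_projective R M
  refine ⟨n, fun i => π (Pi.single i 1), fun i => LinearMap.proj i ∘ₗ ι, fun m => ?_⟩
  calc ∑ i, ι m i • π (Pi.single i 1) = π (ι m) := by
        conv_rhs => rw [pi_eq_sum_univ' (ι m)]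
        simp [map_sum]
    _ = m := LinearMap.congr_fun hπι m

theorem sum_op_smul_eq_of_dual_basis {R M : Type*} [Ring R] [AddCommGroup M] [Module R M]
    {n : ℕ} {x : Fin n → M} {f : Fin n → (M →ₗ[R] R)} (hxf : ∀ m, ∑ i, f i m • x i = m)
    (g : M →ₗ[R] R) : ∑ i, op (g (x i)) • f i = g := by
  ext m
  conv_rhs => rw [← hxf m]
  simp [map_sum]

theorem Module.exists_right_dual_basis (B P : Type*) [Ring B] [AddCommGroup P] [Module Bᵐᵒᵖ P]
    [Module.Finite Bᵐᵒᵖ P] [Module.Projective Bᵐᵒᵖ P] :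
    ∃ (n : ℕ) (x : Fin n → P) (f : Fin n → (P →ₗ[Bᵐᵒᵖ] B)), ∀ p, ∑ i, op (f i p) • x i = p := by
  obtain ⟨n, x, f, hxf⟩ := Module.exists_dual_basis Bᵐᵒᵖ P
  exact ⟨n, x, fun i => (MulOpposite.opLinearEquiv Bᵐᵒᵖ).symm.toLinearMap ∘ₗ f i, hxf⟩

theorem sum_smul_eq_of_right_dual_basis {B P : Type*} [Ring B] [AddCommGroup P]
    [Module Bᵐᵒᵖ P] {n : ℕ} {x : Fin n → P} {f : Fin n → (P →ₗ[Bᵐᵒᵖ] B)}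
    (hxf : ∀ p, ∑ i, op (f i p) • x i = p) (g : P →ₗ[Bᵐᵒᵖ] B) : ∑ i, g (x i) • f i = g := by
  ext p
  conv_rhs => rw [← hxf p]
  simp [map_sum]

section LTensor

variable (R : Type*) [Ring R] (M : Type*) [AddCommGroup M] [Module Rᵐᵒᵖ M]
  {N N' : Type*} [AddCommGroup N] [Module R N] [AddCommGroup N'] [Module R N']

noncomputable def Bal.lTensor (g : N →ₗ[R] N') : Bal R M N →+ Bal R M N' :=
  Bal.liftFun R (fun m n => Bal.tmul R m (g n))
    (fun m m' n => Bal.add_tmul R m m' (g n))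
    (fun m n n' => by rw [map_add, Bal.tmul_add])
    (fun m r n => by rw [map_smul, Bal.op_smul_tmul])

variable {R M}

@[simp] theorem Bal.lTensor_tmul (g : N →ₗ[R] N') (m : M) (n : N) :
    Bal.lTensor R M g (Bal.tmul R m n) = Bal.tmul R m (g n) :=
  Bal.liftFun_tmul R _ _ _ _ m n

theorem Bal.lTensor_leftInverse {g : N →ₗ[R] N'} {g' : N' →ₗ[R] N}
    (h : Function.LeftInverse g g') :
    Function.LeftInverse (Bal.lTensor R M g) (Bal.lTensor R M g') := fun x => by
  induction x using Bal.induction_on with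
  | zero => simp
  | tmul m n => simp [h n]
  | add x y hx hy => simp only [map_add, hx, hy]

theorem Bal.lTensor_smul {S : Type*} [Ring S] [Module S M] [SMulCommClass S Rᵐᵒᵖ M]
    (g : N →ₗ[R] N') (s : S) (x : Bal R M N) :
    Bal.lTensor R M g (s • x) = s • Bal.lTensor R M g x := by
  induction x using Bal.induction_on with
  | zero => simp
  | tmul m n => simp [Bal.lsmul_tmul]
  | add x y hx hy => simp only [smul_add, map_add, hx, hy]

theorem Bal.lTensor_op_smul {S : Type*} [Ring S] [Module Sᵐᵒᵖ N] [SMulCommClass R Sᵐᵒᵖ N]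
    [Module Sᵐᵒᵖ N'] [SMulCommClass R Sᵐᵒᵖ N'] {g : N →ₗ[R] N'}
    (hg : ∀ (s : Sᵐᵒᵖ) (n : N), g (s • n) = s • g n) (s : Sᵐᵒᵖ) (x : Bal R M N) :
    Bal.lTensor R M g (s • x) = s • Bal.lTensor R M g x := by
  induction x using Bal.induction_on with
  | zero => simp
  | tmul m n => simp [Bal.rsmul_tmul, hg]
  | add x y hx hy => simp only [smul_add, map_add, hx, hy]

end LTensor

section SplitEpi

variable {A X Y : Type*} [Ring A] [AddCommGroup X] [Module A X] [Module Aᵐᵒᵖ X]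
  [AddCommGroup Y] [Module A Y] [Module Aᵐᵒᵖ Y]

def IsSplitBimoduleEpi (ε : X →+ A) : Prop :=
  ∃ s : A →+ X, (∀ a c : A, s (a * c) = a • s c) ∧ (∀ a c : A, s (c * a) = op a • s c) ∧
    ∀ a : A, ε (s a) = a

theorem IsSplitBimoduleEpi.surjective {ε : X →+ A} (h : IsSplitBimoduleEpi ε) :
    Function.Surjective ε :=
  let ⟨s, _, _, hs⟩ := h
  fun a => ⟨s a, hs a⟩

theorem IsSplitBimoduleEpi.comp {ε : X →+ A} (h : IsSplitBimoduleEpi ε) {Φ : Y →+ X}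
    {Ψ : X →+ Y} (hΦΨ : Function.LeftInverse Φ Ψ) (hΨl : ∀ (a : A) x, Ψ (a • x) = a • Ψ x)
    (hΨr : ∀ (a : Aᵐᵒᵖ) x, Ψ (a • x) = a • Ψ x) : IsSplitBimoduleEpi (ε.comp Φ) :=
  let ⟨s, hsl, hsr, hs⟩ := h
  ⟨Ψ.comp s, fun a c => by simp [hsl, hΨl], fun a c => by simp [hsr, hΨr],
    fun a => by simp [hΦΨ (s a), hs]⟩

end SplitEpi

theorem symmetric_separable_equivalence_of_frobenius_biseparable_general
    {A B P : Type*} [Ring A] [Ring B]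
    [AddCommGroup P] [Module A P] [Module Bᵐᵒᵖ P] [SMulCommClass A Bᵐᵒᵖ P]
    [Module.Finite A P] [Module.Projective A P]
    [Module.Finite Bᵐᵒᵖ P] [Module.Projective Bᵐᵒᵖ P]
    (Θ : (P →ₗ[Bᵐᵒᵖ] B) → (P →ₗ[A] A))
    (hΘbij : Function.Bijective Θ)
    (hΘadd : ∀ f g : P →ₗ[Bᵐᵒᵖ] B, Θ (f + g) = Θ f + Θ g)
    (hΘB : ∀ (b : B) (f : P →ₗ[Bᵐᵒᵖ] B), Θ (b • f) = b • Θ f)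
    (hΘA : ∀ (a : Aᵐᵒᵖ) (f : P →ₗ[Bᵐᵒᵖ] B), Θ (a • f) = a • Θ f)
    (he₁l : ∀ (a : A) (x : Bal B P (P →ₗ[A] A)), eval₁ A B P (a • x) = a * eval₁ A B P x)
    (he₁r : ∀ (a : A) (x : Bal B P (P →ₗ[A] A)), eval₁ A B P (op a • x) = eval₁ A B P x * a)
    (he₁split : ∃ s : A →+ Bal B P (P →ₗ[A] A),
      (∀ (a c : A), s (a * c) = a • s c) ∧ (∀ (a c : A), s (c * a) = op a • s c) ∧
      ∀ a : A, eval₁ A B P (s a) = a)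
    (he₂l : ∀ (b : B) (y : Bal A (P →ₗ[Bᵐᵒᵖ] B) P), eval₂ A B P (b • y) = b * eval₂ A B P y)
    (he₂r : ∀ (b : B) (y : Bal A (P →ₗ[Bᵐᵒᵖ] B) P), eval₂ A B P (op b • y) = eval₂ A B P y * b)
    (he₂surj : Function.Surjective (eval₂ A B P))
    (he₂split : ∃ t : B →+ Bal A (P →ₗ[Bᵐᵒᵖ] B) P,
      (∀ (b c : B), t (b * c) = b • t c) ∧ (∀ (b c : B), t (c * b) = op b • t c) ∧
      ∀ b : B, eval₂ A B P (t b) = b) :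
    ∃ ν : Bal B P (P →ₗ[Bᵐᵒᵖ] B) →+ A,
      (∀ (a : A) (x : Bal B P (P →ₗ[Bᵐᵒᵖ] B)), ν (a • x) = a * ν x) ∧
      (∀ (a : A) (x : Bal B P (P →ₗ[Bᵐᵒᵖ] B)), ν (op a • x) = ν x * a) ∧
      Function.Surjective ν ∧
      (∃ σ : A →+ Bal B P (P →ₗ[Bᵐᵒᵖ] B),
        (∀ (a c : A), σ (a * c) = a • σ c) ∧ (∀ (a c : A), σ (c * a) = op a • σ c) ∧
        ∀ a : A, ν (σ a) = a) ∧
      ∃ μ : Bal A (P →ₗ[Bᵐᵒᵖ] B) P →+ B,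
        (∀ (b : B) (y : Bal A (P →ₗ[Bᵐᵒᵖ] B) P), μ (b • y) = b * μ y) ∧
        (∀ (b : B) (y : Bal A (P →ₗ[Bᵐᵒᵖ] B) P), μ (op b • y) = μ y * b) ∧
        Function.Surjective μ ∧
        (∃ τ : B →+ Bal A (P →ₗ[Bᵐᵒᵖ] B) P,
          (∀ (b c : B), τ (b * c) = b • τ c) ∧ (∀ (b c : B), τ (c * b) = op b • τ c) ∧
          ∀ b : B, μ (τ b) = b) ∧
        (∃ (n : ℕ) (q' : Fin n → (P →ₗ[Bᵐᵒᵖ] B)) (p' : Fin n → P),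
          (∀ p : P, ∑ i, ν (Bal.tmul B p (q' i)) • p' i = p) ∧
          (∀ q : P →ₗ[Bᵐᵒᵖ] B, ∑ i, op (ν (Bal.tmul B (p' i) q)) • q' i = q)) ∧
        (∃ (k : ℕ) (pj : Fin k → P) (qj : Fin k → (P →ₗ[Bᵐᵒᵖ] B)),
          (∀ q : P →ₗ[Bᵐᵒᵖ] B, ∑ j, μ (Bal.tmul A q (pj j)) • qj j = q) ∧
          (∀ p : P, ∑ j, op (μ (Bal.tmul A (qj j) p)) • pj j = p)) := by
  let e : (P →ₗ[Bᵐᵒᵖ] B) ≃ₗ[B] (P →ₗ[A] A) :=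
    .ofBijective { toFun := Θ, map_add' := hΘadd, map_smul' := hΘB } hΘbij
  have he_op_smul : ∀ (a : Aᵐᵒᵖ) f, e (a • f) = a • e f := hΘA
  have he_symm_op_smul : ∀ (a : Aᵐᵒᵖ) g, e.symm (a • g) = a • e.symm g := fun a g =>
    e.symm_apply_eq.2 (by rw [he_op_smul, e.apply_symm_apply])
  let ν := (eval₁ A B P).comp (Bal.lTensor B P e.toLinearMap)
  have hν : ∀ p q, ν (Bal.tmul B p q) = e q p := fun p q => by simp [ν]
  have hν_split : IsSplitBimoduleEpi ν :=
    IsSplitBimoduleEpi.comp he₁split (Ψ := Bal.lTensor B P e.symm.toLinearMap)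
      (Bal.lTensor_leftInverse e.apply_symm_apply) (Bal.lTensor_smul _)
      (Bal.lTensor_op_smul he_symm_op_smul)
  obtain ⟨n, p', f, hf⟩ := Module.exists_dual_basis A P
  obtain ⟨k, pj, qj, hqj⟩ := Module.exists_right_dual_basis B P
  refine ⟨ν, fun a x => ?_, fun a x => ?_, hν_split.surjective, hν_split, eval₂ A B P, he₂l, he₂r,
    he₂surj, he₂split, ⟨n, fun i => e.symm (f i), p', fun p => ?_, fun q => ?_⟩,
    ⟨k, pj, qj, fun q => ?_, hqj⟩⟩
  · simp only [ν, AddMonoidHom.comp_apply, Bal.lTensor_smul, he₁l]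
  · simp only [ν, AddMonoidHom.comp_apply, Bal.lTensor_op_smul he_op_smul, he₁r]
  · simpa only [hν, e.apply_symm_apply] using hf p
  · refine e.injective ?_
    simpa only [hν, map_sum, he_op_smul, e.apply_symm_apply] using
      sum_op_smul_eq_of_dual_basis hf (e q)
  · simpa only [eval₂_tmul] using sum_smul_eq_of_right_dual_basis hqj q

/-- If `P` is a left and right finite projective bimodule linking `A` and
`B`, with `Hom_B(P_B, B_B) ≅ Hom_A({}_A P, {}_A A)` as `B`-`A`-bimodules (Frobenius) and both
evaluation maps split bimodule epimorphisms (biseparable), then `A` and `B` are symmetric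
separably equivalent with context bimodules `P` and `Q := Hom_B(P_B, B_B)`. -/
theorem symmetric_separable_equivalence_of_frobenius_biseparable
    {A B P : Type*} [Ring A] [Ring B]
    [AddCommGroup P] [Module A P] [Module Bᵐᵒᵖ P] [SMulCommClass A Bᵐᵒᵖ P]
    [Module.Finite A P] [Module.Projective A P]
    [Module.Finite Bᵐᵒᵖ P] [Module.Projective Bᵐᵒᵖ P]
    (Θ : (P →ₗ[Bᵐᵒᵖ] B) → (P →ₗ[A] A))
    (hΘbij : Function.Bijective Θ)
    (hΘadd : ∀ f g : P →ₗ[Bᵐᵒᵖ] B, Θ (f + g) = Θ f + Θ g)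
    (hΘB : ∀ (b : B) (f : P →ₗ[Bᵐᵒᵖ] B), Θ (b • f) = b • Θ f)
    (hΘA : ∀ (a : Aᵐᵒᵖ) (f : P →ₗ[Bᵐᵒᵖ] B), Θ (a • f) = a • Θ f)
    (he₁l : ∀ (a : A) (x : Bal B P (P →ₗ[A] A)), eval₁ A B P (a • x) = a * eval₁ A B P x)
    (he₁r : ∀ (a : A) (x : Bal B P (P →ₗ[A] A)), eval₁ A B P (op a • x) = eval₁ A B P x * a)
    (he₁surj : Function.Surjective (eval₁ A B P))
    (he₁split : ∃ s : A →+ Bal B P (P →ₗ[A] A),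
      (∀ (a c : A), s (a * c) = a • s c) ∧ (∀ (a c : A), s (c * a) = op a • s c) ∧
      ∀ a : A, eval₁ A B P (s a) = a)
    (he₂l : ∀ (b : B) (y : Bal A (P →ₗ[Bᵐᵒᵖ] B) P), eval₂ A B P (b • y) = b * eval₂ A B P y)
    (he₂r : ∀ (b : B) (y : Bal A (P →ₗ[Bᵐᵒᵖ] B) P), eval₂ A B P (op b • y) = eval₂ A B P y * b)
    (he₂surj : Function.Surjective (eval₂ A B P))
    (he₂split : ∃ t : B →+ Bal A (P →ₗ[Bᵐᵒᵖ] B) P,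
      (∀ (b c : B), t (b * c) = b • t c) ∧ (∀ (b c : B), t (c * b) = op b • t c) ∧
      ∀ b : B, eval₂ A B P (t b) = b) :
    ∃ ν : Bal B P (P →ₗ[Bᵐᵒᵖ] B) →+ A,
      (∀ (a : A) (x : Bal B P (P →ₗ[Bᵐᵒᵖ] B)), ν (a • x) = a * ν x) ∧
      (∀ (a : A) (x : Bal B P (P →ₗ[Bᵐᵒᵖ] B)), ν (op a • x) = ν x * a) ∧
      Function.Surjective ν ∧
      (∃ σ : A →+ Bal B P (P →ₗ[Bᵐᵒᵖ] B),
        (∀ (a c : A), σ (a * c) = a • σ c) ∧ (∀ (a c : A), σ (c * a) = op a • σ c) ∧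
        ∀ a : A, ν (σ a) = a) ∧
      ∃ μ : Bal A (P →ₗ[Bᵐᵒᵖ] B) P →+ B,
        (∀ (b : B) (y : Bal A (P →ₗ[Bᵐᵒᵖ] B) P), μ (b • y) = b * μ y) ∧
        (∀ (b : B) (y : Bal A (P →ₗ[Bᵐᵒᵖ] B) P), μ (op b • y) = μ y * b) ∧
        Function.Surjective μ ∧
        (∃ τ : B →+ Bal A (P →ₗ[Bᵐᵒᵖ] B) P,
          (∀ (b c : B), τ (b * c) = b • τ c) ∧ (∀ (b c : B), τ (c * b) = op b • τ c) ∧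
          ∀ b : B, μ (τ b) = b) ∧
        (∃ (n : ℕ) (q' : Fin n → (P →ₗ[Bᵐᵒᵖ] B)) (p' : Fin n → P),
          (∀ p : P, ∑ i, ν (Bal.tmul B p (q' i)) • p' i = p) ∧
          (∀ q : P →ₗ[Bᵐᵒᵖ] B, ∑ i, op (ν (Bal.tmul B (p' i) q)) • q' i = q)) ∧
        (∃ (k : ℕ) (pj : Fin k → P) (qj : Fin k → (P →ₗ[Bᵐᵒᵖ] B)),
          (∀ q : P →ₗ[Bᵐᵒᵖ] B, ∑ j, μ (Bal.tmul A q (pj j)) • qj j = q) ∧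
          (∀ p : P, ∑ j, op (μ (Bal.tmul A (qj j) p)) • pj j = p)) :=
  symmetric_separable_equivalence_of_frobenius_biseparable_general Θ hΘbij hΘadd hΘB hΘA he₁l he₁r
    he₁split he₂l he₂r he₂surj he₂split
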